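/- Let x = P(x) be a strongly-connected quadratic MPS in n variables with least fixed point q* > 0 such that some polynomial P_i contains a monomial of degree exactly 2. Then for every z with 0 ≤ z < q* (strictly in every coordinate), the matrix I − B(z) is nonsingular, the Newton iterate N_P(z) = z + (I − B(z))^{−1}(P(z) − z) is defined, and N_P(z) < q* strictly in every coordinate. -/

import Mathlib

/-
Since every `P i` has degree at most two, Taylor's formula is exact:
`P (w + d) = P w + B(w) d + Q d`, where `Q` collects the quadratic parts. On the nonnegative
orthant `Q` is nonnegative, and strictly positive in every equation with a quadratic term.

Kleene iteration from `0` increases to `q*`, so some iterate `y` satisfies `z ≤ y ≤ P y` and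
`y < q*`; Taylor's formula at `y` then gives `B(z) e + Q e ≤ e` for `e = q* - y > 0`. In an
affine equation every edge of the dependency graph is a positive constant entry of `B(z)`, so
by strong connectivity the positivity of `Q` spreads backwards to every coordinate. Comparing
with `e` then shows that every solution of `u = B(z) u + g` with such a `g` is strictly positive,
which forces `I - B(z)` to be invertible. Finally, Taylor's formula at `z` gives
`N_P(z) = q* - (I - B(z))⁻¹ Q (q* - z)`, and `(I - B(z))⁻¹ Q (q* - z) > 0`.
-/

open Matrix MvPolynomial

/-- Evaluation of a vector of multivariate polynomials. -/
noncomputable def evalVec {n : ℕ} (P : Fin n → MvPolynomial (Fin n) ℝ) (x : Fin n → ℝ) :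
    Fin n → ℝ := fun i => MvPolynomial.eval x (P i)

/-- The Jacobian matrix B(x)_{ij} = ∂P_i/∂x_j evaluated at x. -/
noncomputable def jacob {n : ℕ} (P : Fin n → MvPolynomial (Fin n) ℝ) (x : Fin n → ℝ) :
    Matrix (Fin n) (Fin n) ℝ :=
  Matrix.of fun i j => MvPolynomial.eval x (MvPolynomial.pderiv j (P i))

/-- The Newton operator N_P(z) = z + (I - B(z))⁻¹ (P(z) - z). -/
noncomputable def newtonOp {n : ℕ} (P : Fin n → MvPolynomial (Fin n) ℝ) (z : Fin n → ℝ) :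
    Fin n → ℝ := z + (1 - jacob P z)⁻¹ *ᵥ (evalVec P z - z)

/-- The dependency graph of an MPS is strongly connected. -/
def StronglyConnectedMPS {n : ℕ} (P : Fin n → MvPolynomial (Fin n) ℝ) : Prop :=
  ∀ i j : Fin n, Relation.ReflTransGen (fun a b => MvPolynomial.pderiv b (P a) ≠ 0) i j

open Filter Topology

namespace Finsupp

variable {σ : Type*}

lemma exists_eq_single_add_of_ne_zero {m : σ →₀ ℕ} (hm : m ≠ 0) :
    ∃ a m', m = single a 1 + m' := by
  obtain ⟨a, ha⟩ := Finsupp.ne_iff.mp hm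
  refine ⟨a, m - single a 1, (add_tsub_cancel_of_le ?_).symm⟩
  rw [Finsupp.single_le_iff]
  simpa [Nat.one_le_iff_ne_zero] using ha

lemma eq_zero_or_single_or_single_add_single {m : σ →₀ ℕ} (hm : m.degree ≤ 2) :
    m = 0 ∨ (∃ a, m = single a 1) ∨ ∃ a b, m = single a 1 + single b 1 := by
  rcases eq_or_ne m 0 with rfl | h0
  · exact Or.inl rfl
  obtain ⟨a, m', rfl⟩ := exists_eq_single_add_of_ne_zero h0
  rcases eq_or_ne m' 0 with rfl | h1
  · exact Or.inr (Or.inl ⟨a, add_zero _⟩)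
  obtain ⟨b, m'', rfl⟩ := exists_eq_single_add_of_ne_zero h1
  have : m''.degree = 0 := by simp only [map_add, degree_single] at hm; omega
  rw [degree_eq_zero_iff] at this
  exact Or.inr (Or.inr ⟨a, b, by rw [this, add_zero]⟩)

end Finsupp

namespace MvPolynomial

variable {σ : Type*}

section Taylor

variable [Fintype σ]

lemma eval_add_monomial_of_degree_le_two {m : σ →₀ ℕ} (hm : m.degree ≤ 2) (c : ℝ)
    (z d : σ → ℝ) :
    eval (z + d) (monomial m c) = eval z (monomial m c)
      + ∑ b, d b * eval z (pderiv b (monomial m c))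
      + eval d (homogeneousComponent 2 (monomial m c)) := by
  classical
  rw [homogeneousComponent_of_mem (isHomogeneous_monomial c rfl)]
  rcases Finsupp.eq_zero_or_single_or_single_add_single hm with rfl | ⟨a, rfl⟩ | ⟨a, b, rfl⟩
  · simp
  · have : monomial (Finsupp.single a 1) c = C c * X a := by
      rw [← C_mul_X_pow_eq_monomial, pow_one]
    simp [this, Pi.single_apply, apply_ite (eval z)]
    ring
  · have : monomial (Finsupp.single a 1 + Finsupp.single b 1) c = C c * X a * X b := by
      rw [monomial_add_single, ← C_mul_X_pow_eq_monomial, pow_one, pow_one]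
    simp [this, Pi.single_apply, apply_ite (eval z), mul_add, Finset.sum_add_distrib]
    ring

lemma eval_add_of_totalDegree_le_two {p : MvPolynomial σ ℝ} (hp : p.totalDegree ≤ 2)
    (z d : σ → ℝ) :
    eval (z + d) p = eval z p + ∑ b, d b * eval z (pderiv b p)
      + eval d (homogeneousComponent 2 p) := by
  conv_lhs => rw [p.as_sum]
  conv_rhs => rw [p.as_sum]
  simp only [map_sum, Finset.mul_sum]
  rw [Finset.sum_comm (s := Finset.univ), ← Finset.sum_add_distrib, ← Finset.sum_add_distrib]
  exact Finset.sum_congr rfl fun m hm =>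
    eval_add_monomial_of_degree_le_two ((le_totalDegree hm).trans hp) _ z d

end Taylor

lemma homogeneousComponent_totalDegree_ne_zero {R : Type*} [CommSemiring R]
    {p : MvPolynomial σ R} (hp : p ≠ 0) : homogeneousComponent p.totalDegree p ≠ 0 := by
  obtain ⟨m, hm, hmax⟩ := Finset.exists_mem_eq_sup p.support (support_nonempty.mpr hp)
    fun s => s.sum fun _ e => e
  intro h
  have := congrArg (coeff m) h
  rw [coeff_homogeneousComponent, coeff_zero, totalDegree, hmax, ite_eq_right_iff] at this
  exact mem_support_iff.mp hm (this rfl)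

lemma pderiv_eq_C_of_totalDegree_le_one {R : Type*} [CommSemiring R] {p : MvPolynomial σ R}
    (hp : p.totalDegree ≤ 1) (b : σ) : pderiv b p = C (coeff (Finsupp.single b 1) p) := by
  classical
  ext m
  rw [coeff_pderiv, coeff_C]
  split_ifs with hm
  · simp [← hm]
  · have : m.degree ≠ 0 := (Finsupp.degree_eq_zero_iff m).not.mpr (Ne.symm hm)
    rw [coeff_eq_zero_of_totalDegree_lt, zero_mul]
    rw [← Finsupp.degree_apply, map_add, Finsupp.degree_single]
    omega

variable {p : MvPolynomial σ ℝ}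

lemma eval_nonneg_of_coeff_nonneg (hp : ∀ m, 0 ≤ coeff m p) {x : σ → ℝ} (hx : 0 ≤ x) :
    0 ≤ eval x p := by
  rw [eval_eq]
  exact Finset.sum_nonneg fun m _ =>
    mul_nonneg (hp m) (Finset.prod_nonneg fun i _ => pow_nonneg (hx i) _)

lemma eval_pos_of_coeff_nonneg (hp : ∀ m, 0 ≤ coeff m p) (hp0 : p ≠ 0) {x : σ → ℝ}
    (hx : ∀ i, 0 < x i) : 0 < eval x p := by
  obtain ⟨m, hm⟩ := support_nonempty.mpr hp0
  rw [eval_eq]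
  refine Finset.sum_pos' (fun m _ => mul_nonneg (hp m) ?_) ⟨m, hm, mul_pos ?_ ?_⟩
  · exact Finset.prod_nonneg fun i _ => pow_nonneg (hx i).le _
  · exact (hp m).lt_of_ne (mem_support_iff.mp hm).symm
  · exact Finset.prod_pos fun i _ => pow_pos (hx i) _

lemma eval_le_eval_of_coeff_nonneg (hp : ∀ m, 0 ≤ coeff m p) {x y : σ → ℝ} (hx : 0 ≤ x)
    (hxy : x ≤ y) : eval x p ≤ eval y p := by
  rw [eval_eq, eval_eq]
  refine Finset.sum_le_sum fun m _ => mul_le_mul_of_nonneg_left ?_ (hp m)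
  exact Finset.prod_le_prod (fun i _ => pow_nonneg (hx i) _)
    fun i _ => pow_le_pow_left₀ (hx i) (hxy i) _

lemma eval_lt_eval_of_coeff_nonneg (hp : ∀ m, 0 ≤ coeff m p) (hp0 : 0 < p.totalDegree)
    {x y : σ → ℝ} (hx : 0 ≤ x) (hxy : ∀ i, x i < y i) : eval x p < eval y p := by
  obtain ⟨m, hm, hmax⟩ := Finset.exists_mem_eq_sup p.support
    (support_nonempty.mpr fun h => by simp [h] at hp0) fun s => s.sum fun _ e => e
  have hm0 : m.support.Nonempty := by
    rw [Finsupp.support_nonempty_iff]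
    rintro rfl
    simp [totalDegree, hmax] at hp0
  -- compare through the midpoint, which is strictly positive
  set w : σ → ℝ := fun i => (x i + y i) / 2
  have hxw : ∀ i, x i < w i := fun i => by simp only [w]; linarith [hxy i]
  have hwy : ∀ i, w i < y i := fun i => by simp only [w]; linarith [hxy i]
  have hw : ∀ i, 0 < w i := fun i => (hx i).trans_lt (hxw i)
  refine (eval_le_eval_of_coeff_nonneg hp hx fun i => (hxw i).le).trans_lt ?_
  rw [eval_eq, eval_eq]
  refine Finset.sum_lt_sum (fun m _ => mul_le_mul_of_nonneg_left ?_ (hp m)) ⟨m, hm, ?_⟩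
  · exact Finset.prod_le_prod (fun i _ => pow_nonneg (hw i).le _)
      fun i _ => pow_le_pow_left₀ (hw i).le (hwy i).le _
  refine mul_lt_mul_of_pos_left ?_ ((hp m).lt_of_ne (mem_support_iff.mp hm).symm)
  exact Finset.prod_lt_prod_of_nonempty (fun i _ => pow_pos (hw i) _)
    (fun i hi => pow_lt_pow_left₀ (hwy i) (hw i).le (Finsupp.mem_support_iff.mp hi)) hm0

lemma coeff_pderiv_nonneg (hp : ∀ m, 0 ≤ coeff m p) (b : σ) (m : σ →₀ ℕ) :
    0 ≤ coeff m (pderiv b p) := by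
  rw [coeff_pderiv]
  exact mul_nonneg (hp _) (by positivity)

lemma eval_pderiv_pos_of_totalDegree_le_one (hp : ∀ m, 0 ≤ coeff m p) (hp1 : p.totalDegree ≤ 1)
    {b : σ} (hb : pderiv b p ≠ 0) (x : σ → ℝ) : 0 < eval x (pderiv b p) := by
  rw [pderiv_eq_C_of_totalDegree_le_one hp1] at hb ⊢
  rw [eval_C]
  exact (hp _).lt_of_ne fun h => hb (by rw [← h, C_0])

lemma coeff_homogeneousComponent_nonneg (hp : ∀ m, 0 ≤ coeff m p) (k : ℕ) (m : σ →₀ ℕ) :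
    0 ≤ coeff m (homogeneousComponent k p) := by
  rw [coeff_homogeneousComponent]
  split_ifs
  exacts [hp m, le_rfl]
end MvPolynomial

namespace Matrix

variable {ι : Type*} [Fintype ι] {B : Matrix ι ι ℝ}

lemma mulVec_nonneg_of_nonneg (hB : ∀ i j, 0 ≤ B i j) {v : ι → ℝ} (hv : 0 ≤ v) :
    0 ≤ B *ᵥ v := fun i =>
  Finset.sum_nonneg fun j _ => mul_nonneg (hB i j) (hv j)

lemma mulVec_mono_of_nonneg (hB : ∀ i j, 0 ≤ B i j) {u v : ι → ℝ} (huv : u ≤ v) :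
    B *ᵥ u ≤ B *ᵥ v := by
  have := mulVec_nonneg_of_nonneg hB (sub_nonneg.mpr huv)
  rwa [mulVec_sub, sub_nonneg] at this

variable [DecidableEq ι]

lemma pow_mulVec_le_of_mulVec_le (hB : ∀ i j, 0 ≤ B i j) {e : ι → ℝ} (hBe : B *ᵥ e ≤ e)
    (t : ℕ) : B ^ t *ᵥ e ≤ e := by
  induction t with
  | zero => simp
  | succ t ih =>
    rw [pow_succ, ← mulVec_mulVec]
    exact (mulVec_mono_of_nonneg (pow_apply_nonneg hB t) hBe).trans ih

lemma eq_pow_mulVec_add_sum {u g : ι → ℝ} (hu : u = B *ᵥ u + g) (m : ℕ) :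
    u = B ^ m *ᵥ u + ∑ t ∈ Finset.range m, B ^ t *ᵥ g := by
  induction m with
  | zero => simp
  | succ m ih =>
    conv_lhs => rw [ih]
    conv_lhs => rw [hu]
    rw [mulVec_add, mulVec_mulVec, ← pow_succ, Finset.sum_range_succ]
    abel

lemma exists_sum_pow_mulVec_pos (hB : ∀ i j, 0 ≤ B i j) {g : ι → ℝ} (hg : 0 ≤ g)
    (hreach : ∀ j, ∃ t, 0 < (B ^ t *ᵥ g) j) :
    ∃ m, ∀ j, 0 < (∑ t ∈ Finset.range m, B ^ t *ᵥ g) j := by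
  choose T hT using hreach
  refine ⟨Finset.univ.sup T + 1, fun j => ?_⟩
  rw [Finset.sum_apply]
  refine (hT j).trans_le (Finset.single_le_sum (f := fun t => (B ^ t *ᵥ g) j)
    (fun t _ => mulVec_nonneg_of_nonneg (pow_apply_nonneg hB t) hg j) ?_)
  exact Finset.mem_range.mpr (Nat.lt_succ_of_le (Finset.le_sup (Finset.mem_univ j)))

lemma pos_of_eq_mulVec_add (hB : ∀ i j, 0 ≤ B i j) {e : ι → ℝ} (he : ∀ i, 0 < e i)
    (hBe : B *ᵥ e ≤ e) {g : ι → ℝ} (hg : 0 ≤ g) (hreach : ∀ j, ∃ t, 0 < (B ^ t *ᵥ g) j)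
    {u : ι → ℝ} (hu : u = B *ᵥ u + g) (j : ι) : 0 < u j := by
  obtain ⟨m, hm⟩ := exists_sum_pow_mulVec_pos hB hg hreach
  -- `c` is the largest multiple of `e` below `u`, attained at `j₀`
  obtain ⟨j₀, -, hj₀⟩ := Finset.univ.exists_min_image (fun k => u k / e k) ⟨j, Finset.mem_univ j⟩
  set c := u j₀ / e j₀
  have hce : c • e ≤ u := fun k => by
    simpa [le_div_iff₀ (he k)] using hj₀ k (Finset.mem_univ k)
  have hc : 0 < c := by
    by_contra! hc
    have h1 : c • e ≤ B ^ m *ᵥ u := by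
      refine le_trans (fun k => ?_) (mulVec_mono_of_nonneg (pow_apply_nonneg hB m) hce)
      rw [mulVec_smul, Pi.smul_apply, Pi.smul_apply, smul_eq_mul, smul_eq_mul]
      exact mul_le_mul_of_nonpos_left (pow_mulVec_le_of_mulVec_le hB hBe m k) hc
    have h2 := congrFun (eq_pow_mulVec_add_sum hu m) j₀
    have h3 : u j₀ = c * e j₀ := (div_mul_cancel₀ _ (he j₀).ne').symm
    simp only [Pi.add_apply] at h2
    linarith [h1 j₀, hm j₀, show (c • e) j₀ = c * e j₀ from rfl]
  exact (mul_pos hc (he j)).trans_le (hce j)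

lemma det_one_sub_ne_zero (hB : ∀ i j, 0 ≤ B i j) {e : ι → ℝ} (he : ∀ i, 0 < e i)
    (hBe : B *ᵥ e ≤ e) (hreach : ∀ j, ∃ t, 0 < (B ^ t *ᵥ (e - B *ᵥ e)) j) :
    (1 - B).det ≠ 0 := by
  intro hdet
  obtain ⟨v, hv0, hv⟩ := exists_mulVec_eq_zero_iff.mpr hdet
  obtain ⟨j, hj⟩ := Function.ne_iff.mp hv0
  have hBv : B *ᵥ v = v := by
    rw [sub_mulVec, one_mulVec, sub_eq_zero] at hv
    exact hv.symm
  -- moving `e` along the fixed vector `v` keeps it a solution, but makes coordinate `j` vanish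
  set u := e - (e j / v j) • v
  have hu : u = B *ᵥ u + (e - B *ᵥ e) := by
    simp only [u, mulVec_sub, mulVec_smul, hBv]
    abel
  have := pos_of_eq_mulVec_add hB he hBe (sub_nonneg.mpr hBe) hreach hu j
  simp [u, div_mul_cancel₀ _ hj] at this

lemma inv_one_sub_mulVec_eq (h : IsUnit (1 - B).det) (g : ι → ℝ) :
    (1 - B)⁻¹ *ᵥ g = B *ᵥ ((1 - B)⁻¹ *ᵥ g) + g := by
  have hB : B * (1 - B)⁻¹ = (1 - B)⁻¹ - 1 := by
    have := mul_nonsing_inv (1 - B) h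
    rw [sub_mul, one_mul, sub_eq_iff_eq_add] at this
    rw [eq_sub_iff_add_eq, add_comm, ← this]
  rw [mulVec_mulVec, hB, sub_mulVec, one_mulVec, sub_add_cancel]

end Matrix

section MPS

variable {n : ℕ} {P : Fin n → MvPolynomial (Fin n) ℝ}

noncomputable def quadraticPart (P : Fin n → MvPolynomial (Fin n) ℝ) (d : Fin n → ℝ) :
    Fin n → ℝ :=
  fun i => eval d (homogeneousComponent 2 (P i))

lemma evalVec_add (hdeg : ∀ i, (P i).totalDegree ≤ 2) (w d : Fin n → ℝ) :
    evalVec P (w + d) = evalVec P w + jacob P w *ᵥ d + quadraticPart P d := by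
  ext i
  simp only [evalVec, Pi.add_apply, eval_add_of_totalDegree_le_two (hdeg i), quadraticPart,
    mulVec, dotProduct, jacob, of_apply, mul_comm (d _)]

lemma evalVec_le_evalVec (hpos : ∀ i m, 0 ≤ (P i).coeff m) {x y : Fin n → ℝ} (hx : 0 ≤ x)
    (hxy : x ≤ y) : evalVec P x ≤ evalVec P y := fun i =>
  eval_le_eval_of_coeff_nonneg (hpos i) hx hxy

lemma jacob_nonneg (hpos : ∀ i m, 0 ≤ (P i).coeff m) {z : Fin n → ℝ} (hz : 0 ≤ z) (i j : Fin n) :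
    0 ≤ jacob P z i j :=
  eval_nonneg_of_coeff_nonneg (coeff_pderiv_nonneg (hpos i) j) hz

lemma jacob_mulVec_le_jacob_mulVec (hpos : ∀ i m, 0 ≤ (P i).coeff m) {z y e : Fin n → ℝ}
    (hz : 0 ≤ z) (hzy : z ≤ y) (he : 0 ≤ e) : jacob P z *ᵥ e ≤ jacob P y *ᵥ e := fun i => by
  simp only [mulVec, dotProduct, jacob, of_apply]
  exact Finset.sum_le_sum fun j _ => mul_le_mul_of_nonneg_right
    (eval_le_eval_of_coeff_nonneg (coeff_pderiv_nonneg (hpos i) j) hz hzy) (he j)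

lemma quadraticPart_nonneg (hpos : ∀ i m, 0 ≤ (P i).coeff m) {d : Fin n → ℝ} (hd : 0 ≤ d) :
    0 ≤ quadraticPart P d := fun i =>
  eval_nonneg_of_coeff_nonneg (coeff_homogeneousComponent_nonneg (hpos i) 2) hd

lemma quadraticPart_pos (hpos : ∀ i m, 0 ≤ (P i).coeff m) {d : Fin n → ℝ} (hd : ∀ i, 0 < d i)
    {i : Fin n} (hi : homogeneousComponent 2 (P i) ≠ 0) : 0 < quadraticPart P d i :=
  eval_pos_of_coeff_nonneg (coeff_homogeneousComponent_nonneg (hpos i) 2) hi hd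

lemma totalDegree_pos_of_stronglyConnected (hsc : StronglyConnectedMPS P) {i₀ : Fin n}
    (hi₀ : (P i₀).totalDegree = 2) (i : Fin n) : 0 < (P i).totalDegree := by
  rcases (hsc i i₀).cases_head with rfl | ⟨c, hic, -⟩
  · omega
  · exact Nat.pos_of_ne_zero fun h => hic (by rw [totalDegree_eq_zero_iff_eq_C.mp h, pderiv_C])

lemma exists_jacob_pow_mulVec_pos (hdeg : ∀ i, (P i).totalDegree ≤ 2)
    (hpos : ∀ i m, 0 ≤ (P i).coeff m) (hsc : StronglyConnectedMPS P) {i₀ : Fin n}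
    (hi₀ : homogeneousComponent 2 (P i₀) ≠ 0) {z g : Fin n → ℝ} (hz : 0 ≤ z) (hg : 0 ≤ g)
    (hgq : ∀ i, homogeneousComponent 2 (P i) ≠ 0 → 0 < g i) (j : Fin n) :
    ∃ t, 0 < (jacob P z ^ t *ᵥ g) j := by
  induction hsc j i₀ using Relation.ReflTransGen.head_induction_on with
  | refl => exact ⟨0, by simpa using hgq i₀ hi₀⟩
  | @head a c hac _ ih =>
    by_cases ha : homogeneousComponent 2 (P a) ≠ 0
    · exact ⟨0, by simpa using hgq a ha⟩
    have ha1 : (P a).totalDegree ≤ 1 := by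
      have : (P a).totalDegree ≠ 2 := fun h => ha (h ▸ homogeneousComponent_totalDegree_ne_zero
        fun h0 => by simp [h0] at h)
      have := hdeg a
      omega
    obtain ⟨t, ht⟩ := ih
    have hB := jacob_nonneg hpos hz
    refine ⟨t + 1, ?_⟩
    rw [pow_succ', ← mulVec_mulVec]
    refine (mul_pos (eval_pderiv_pos_of_totalDegree_le_one (hpos a) ha1 hac z) ht).trans_le ?_
    exact Finset.single_le_sum (f := fun k => jacob P z a k * (jacob P z ^ t *ᵥ g) k)
      (fun k _ => mul_nonneg (hB a k) (mulVec_nonneg_of_nonneg (pow_apply_nonneg hB t) hg k))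
      (Finset.mem_univ c)

lemma jacob_mulVec_add_quadraticPart_le (hdeg : ∀ i, (P i).totalDegree ≤ 2)
    (hpos : ∀ i m, 0 ≤ (P i).coeff m) {q y z : Fin n → ℝ} (hfix : evalVec P q = q)
    (hz : 0 ≤ z) (hzy : z ≤ y) (hyq : y ≤ q) (hyP : y ≤ evalVec P y) :
    jacob P z *ᵥ (q - y) + quadraticPart P (q - y) ≤ q - y := by
  have htaylor := evalVec_add hdeg y (q - y)
  rw [add_sub_cancel, hfix] at htaylor
  calc jacob P z *ᵥ (q - y) + quadraticPart P (q - y)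
      ≤ jacob P y *ᵥ (q - y) + quadraticPart P (q - y) :=
        add_le_add_left (jacob_mulVec_le_jacob_mulVec hpos hz hzy (sub_nonneg.mpr hyq)) _
    _ = q - evalVec P y := by linear_combination -htaylor
    _ ≤ q - y := sub_le_sub_left hyP q

lemma newtonOp_eq (hdeg : ∀ i, (P i).totalDegree ≤ 2) {q z : Fin n → ℝ}
    (hfix : evalVec P q = q) (hA : IsUnit (1 - jacob P z).det) :
    newtonOp P z = q - (1 - jacob P z)⁻¹ *ᵥ quadraticPart P (q - z) := by
  have htaylor := evalVec_add hdeg z (q - z)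
  rw [add_sub_cancel, hfix] at htaylor
  have hres : evalVec P z - z = (1 - jacob P z) *ᵥ (q - z) - quadraticPart P (q - z) := by
    rw [sub_mulVec, one_mulVec]
    linear_combination -htaylor
  rw [newtonOp, hres, mulVec_sub, mulVec_mulVec, nonsing_inv_mul _ hA, one_mulVec]
  abel

lemma iterate_evalVec_zero_nonneg (hpos : ∀ i m, 0 ≤ (P i).coeff m) (k : ℕ) :
    0 ≤ (evalVec P)^[k] 0 := by
  induction k with
  | zero => exact le_rfl
  | succ k ih =>
    rw [Function.iterate_succ_apply']
    exact fun i => eval_nonneg_of_coeff_nonneg (hpos i) ih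

lemma monotone_iterate_evalVec_zero (hpos : ∀ i m, 0 ≤ (P i).coeff m) :
    Monotone fun k => (evalVec P)^[k] 0 := by
  refine monotone_nat_of_le_succ fun k => ?_
  induction k with
  | zero => exact iterate_evalVec_zero_nonneg hpos 1
  | succ k ih =>
    rw [Function.iterate_succ_apply' _ k, Function.iterate_succ_apply' _ (k + 1)]
    exact evalVec_le_evalVec hpos (iterate_evalVec_zero_nonneg hpos k) ih

lemma iterate_evalVec_zero_lt (hpos : ∀ i m, 0 ≤ (P i).coeff m)
    (hnc : ∀ i, 0 < (P i).totalDegree) {q : Fin n → ℝ} (hq : ∀ i, 0 < q i)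
    (hfix : evalVec P q = q) (k : ℕ) (i : Fin n) : (evalVec P)^[k] 0 i < q i := by
  induction k generalizing i with
  | zero => exact hq i
  | succ k ih =>
    rw [Function.iterate_succ_apply', ← hfix]
    exact eval_lt_eval_of_coeff_nonneg (hpos i) (hnc i) (iterate_evalVec_zero_nonneg hpos k) ih

lemma tendsto_iterate_evalVec_zero (hpos : ∀ i m, 0 ≤ (P i).coeff m)
    (hnc : ∀ i, 0 < (P i).totalDegree) {q : Fin n → ℝ} (hq : ∀ i, 0 < q i)
    (hfix : evalVec P q = q) (hleast : ∀ r : Fin n → ℝ, 0 ≤ r → evalVec P r = r → q ≤ r) :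
    Tendsto (fun k => (evalVec P)^[k] 0) atTop (𝓝 q) := by
  set x := fun k => (evalVec P)^[k] 0
  have hbdd : BddAbove (Set.range x) :=
    ⟨q, Set.forall_mem_range.mpr fun k i => (iterate_evalVec_zero_lt hpos hnc hq hfix k i).le⟩
  have hlim := tendsto_atTop_ciSup (monotone_iterate_evalVec_zero hpos) hbdd
  have hcont : Continuous (evalVec P) := continuous_pi fun i => continuous_eval (P i)
  have hsucc : Tendsto (fun k => x (k + 1)) atTop (𝓝 (evalVec P (⨆ k, x k))) := by
    simp only [x, Function.iterate_succ_apply']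
    exact (hcont.tendsto _).comp hlim
  have hfix' : evalVec P (⨆ k, x k) = ⨆ k, x k :=
    tendsto_nhds_unique hsucc ((tendsto_add_atTop_iff_nat 1).mpr hlim)
  have hle : q ≤ ⨆ k, x k :=
    hleast _ ((iterate_evalVec_zero_nonneg hpos 0).trans (le_ciSup hbdd 0)) hfix'
  rwa [le_antisymm (ciSup_le fun k i => (iterate_evalVec_zero_lt hpos hnc hq hfix k i).le) hle]
    at hlim

lemma exists_le_evalVec_between (hpos : ∀ i m, 0 ≤ (P i).coeff m)
    (hnc : ∀ i, 0 < (P i).totalDegree) {q : Fin n → ℝ} (hq : ∀ i, 0 < q i)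
    (hfix : evalVec P q = q) (hleast : ∀ r : Fin n → ℝ, 0 ≤ r → evalVec P r = r → q ≤ r)
    {z : Fin n → ℝ} (hzq : ∀ i, z i < q i) :
    ∃ y, 0 ≤ y ∧ z ≤ y ∧ y ≤ evalVec P y ∧ ∀ i, y i < q i := by
  have hlim := tendsto_pi_nhds.mp (tendsto_iterate_evalVec_zero hpos hnc hq hfix hleast)
  obtain ⟨K, hK⟩ := (eventually_all.mpr fun i => (hlim i).eventually (lt_mem_nhds (hzq i))).exists
  refine ⟨_, iterate_evalVec_zero_nonneg hpos K, fun i => (hK i).le, ?_,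
    iterate_evalVec_zero_lt hpos hnc hq hfix K⟩
  rw [← Function.iterate_succ_apply' (evalVec P)]
  exact monotone_iterate_evalVec_zero hpos K.le_succ

end MPS

theorem stmt12 {n : ℕ} (P : Fin n → MvPolynomial (Fin n) ℝ)
    (hdeg : ∀ i, (P i).totalDegree ≤ 2) (hpos : ∀ i m, 0 ≤ (P i).coeff m)
    (hsc : StronglyConnectedMPS P)
    (hnl : ∃ i, (P i).totalDegree = 2)
    (q : Fin n → ℝ) (hq : ∀ i, 0 < q i) (hfix : evalVec P q = q)
    (hleast : ∀ r : Fin n → ℝ, 0 ≤ r → evalVec P r = r → q ≤ r)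
    (z : Fin n → ℝ) (hz0 : 0 ≤ z) (hzq : ∀ i, z i < q i) :
    IsUnit (1 - jacob P z).det ∧ ∀ i, newtonOp P z i < q i := by
  obtain ⟨i₀, hi₀⟩ := hnl
  have hquad : homogeneousComponent 2 (P i₀) ≠ 0 :=
    hi₀ ▸ homogeneousComponent_totalDegree_ne_zero fun h => by simp [h] at hi₀
  obtain ⟨y, -, hzy, hyP, hyq⟩ := exists_le_evalVec_between hpos
    (totalDegree_pos_of_stronglyConnected hsc hi₀) hq hfix hleast hzq
  set B := jacob P z
  have hB : ∀ i j, 0 ≤ B i j := jacob_nonneg hpos hz0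
  have hreach (g : Fin n → ℝ) := exists_jacob_pow_mulVec_pos (g := g) hdeg hpos hsc hquad hz0
  have he : ∀ i, 0 < (q - y) i := fun i => sub_pos.mpr (hyq i)
  have hQe : quadraticPart P (q - y) ≤ q - y - B *ᵥ (q - y) := le_sub_iff_add_le'.mpr
    (jacob_mulVec_add_quadraticPart_le hdeg hpos hfix hz0 hzy (fun i => (hyq i).le) hyP)
  have hQe0 := quadraticPart_nonneg hpos fun i => (he i).le
  have hBe : B *ᵥ (q - y) ≤ q - y := sub_nonneg.mp (hQe0.trans hQe)
  have hdet : IsUnit (1 - B).det := (det_one_sub_ne_zero hB he hBe (hreach _ (hQe0.trans hQe)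
    fun i hi => (quadraticPart_pos hpos he hi).trans_le (hQe i))).isUnit
  refine ⟨hdet, fun i => ?_⟩
  have hd : ∀ i, 0 < (q - z) i := fun i => sub_pos.mpr (hzq i)
  have hQd0 := quadraticPart_nonneg hpos fun i => (hd i).le
  have hw := pos_of_eq_mulVec_add hB he hBe hQd0
    (hreach _ hQd0 fun i hi => quadraticPart_pos hpos hd hi) (inv_one_sub_mulVec_eq hdet _) i
  rw [newtonOp_eq hdeg hfix hdet, Pi.sub_apply]
  linarith
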